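/- arXiv:2512.01093 — 2 statements merged into one kernel-verified Lean document; each statement's English description precedes it below -/
import Mathlib

section
/- For random variables with a discrete joint distribution, the factorization semantic implies the independence semantic of Bayesian Networks: if P(x₁, ..., xₘ) = ∏_{i=1}^m P(xᵢ | pa_G(Xᵢ)) for a DAG G whose node set is {X₁, ..., Xₘ}, then each Xᵢ is conditionally independent of its non-descendants in G given its parents in G. -/
open MeasureTheory

open scoped Classical ENNReal

set_option linter.unusedSectionVars false
set_option maxHeartbeats 1000000

/-- The set of parents of a node in a directed graph. -/
def Pa {V : Type*} (A : V → V → Prop) (v : V) : Set V := {u | A u v}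

/-- The `i`-fold parent set: `Pa^{(0)}(v) = {v}`, `Pa^{(i)}(v) = Pa(Pa^{(i-1)}(v))`. -/
def PaIter {V : Type*} (A : V → V → Prop) : ℕ → V → Set V
  | 0, v => {v}
  | n + 1, v => ⋃ u ∈ PaIter A n v, Pa A u

/-- A root is a node with no parents. -/
def IsRoot {V : Type*} (A : V → V → Prop) (v : V) : Prop := ∀ u, ¬ A u v

/-- There is a directed path of length `n` from some root to `v`. -/
def HasRootPath {V : Type*} (A : V → V → Prop) (n : ℕ) (v : V) : Prop :=
  ∃ p : Fin (n + 1) → V, IsRoot A (p 0) ∧ p (Fin.last n) = v ∧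
    ∀ i : Fin n, A (p i.castSucc) (p i.succ)

/-- The height of a node: the length of the longest path from a root to `v`. -/
noncomputable def height {V : Type*} (A : V → V → Prop) (v : V) : ℕ :=
  sSup {n | HasRootPath A n v}

/-- The non-descendants of `v`: nodes `w ≠ v` with no directed path from `v` to `w`. -/
def NonDe {V : Type*} (A : V → V → Prop) (v : V) : Set V :=
  {w | w ≠ v ∧ ¬ Relation.TransGen A v w}

/-- The inclusive recursive parents of `v`: `⋃_{i=0}^{H(v)} Pa^{(i)}(v)`. -/
noncomputable def InclParents {V : Type*} (A : V → V → Prop) (v : V) : Set V :=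
  ⋃ i ∈ Finset.Iic (height A v), PaIter A i v

/-- The exclusive recursive parents of `v`: `⋃_{i=1}^{H(v)} Pa^{(i)}(v)`. -/
noncomputable def ExclParents {V : Type*} (A : V → V → Prop) (v : V) : Set V :=
  ⋃ i ∈ Finset.Icc 1 (height A v), PaIter A i v

namespace BNFact

lemma tw {γ : Type*} [Fintype γ] {f g : γ → ℝ≥0∞} (hle : ∀ z, f z ≤ g z)
    (hsum : ∑ z, g z ≤ ∑ z, f z) (hfin : (∑ z, f z) ≠ ⊤) (z : γ) : g z ≤ f z := by
  have hR : (∑ w ∈ Finset.univ.erase z, f w) ≠ ⊤ :=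
    ne_top_of_le_ne_top hfin (Finset.sum_le_sum_of_subset (Finset.subset_univ _))
  have h1 : g z + ∑ w ∈ Finset.univ.erase z, f w ≤ f z + ∑ w ∈ Finset.univ.erase z, f w := by
    calc g z + ∑ w ∈ Finset.univ.erase z, f w
        ≤ g z + ∑ w ∈ Finset.univ.erase z, g w :=
          add_le_add (le_refl _) (Finset.sum_le_sum fun w _ => hle w)
      _ = ∑ w, g w := Finset.add_sum_erase _ g (Finset.mem_univ z)
      _ ≤ ∑ w, f w := hsum
      _ = f z + ∑ w ∈ Finset.univ.erase z, f w := (Finset.add_sum_erase _ f (Finset.mem_univ z)).symm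
  exact (ENNReal.add_le_add_iff_right hR).1 h1



variable {Ω ι : Type*} [MeasurableSpace Ω]
  [Fintype ι] {α : ι → Type*} [∀ i, Fintype (α i)]
  [∀ i, MeasurableSpace (α i)] [∀ i, MeasurableSingletonClass (α i)]

/-- The conditional probability factor `P(xᵤ | pa(u))`. -/
noncomputable def cnd (P : Measure Ω) (X : (i : ι) → Ω → α i) (A : ι → ι → Prop)
    (u : ι) (x : (i : ι) → α i) : ℝ≥0∞ :=
  P (X u ⁻¹' {x u} ∩ ⋂ p ∈ Pa A u, X p ⁻¹' {x p}) / P (⋂ p ∈ Pa A u, X p ⁻¹' {x p})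

variable {P : Measure Ω} [IsProbabilityMeasure P] {X : (i : ι) → Ω → α i} {A : ι → ι → Prop}

lemma measInter (hX : ∀ i, Measurable (X i)) {κ : ι → Prop} (x : (i : ι) → α i) :
    MeasurableSet (⋂ u, ⋂ (_ : κ u), X u ⁻¹' {x u}) :=
  MeasurableSet.iInter fun u => MeasurableSet.iInter fun _ => hX u (measurableSet_singleton _)

lemma measFull (hX : ∀ i, Measurable (X i)) (x : (i : ι) → α i) :
    MeasurableSet (⋂ u, X u ⁻¹' {x u}) :=
  MeasurableSet.iInter fun u => hX u (measurableSet_singleton _)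

lemma cnd_congr {u : ι} {x y : (i : ι) → α i} (h1 : x u = y u)
    (h2 : ∀ p, A p u → x p = y p) : cnd P X A u x = cnd P X A u y := by
  unfold cnd
  rw [h1]
  have : (⋂ p ∈ Pa A u, X p ⁻¹' {x p}) = ⋂ p ∈ Pa A u, X p ⁻¹' {y p} :=
    Set.iInter₂_congr fun p hp => by rw [h2 p hp]
  rw [this]

/-- partition of a measurable set by values of one variable -/
lemma part1 (hX : ∀ i, Measurable (X i)) (E : Set Ω) (hE : MeasurableSet E) (m : ι) :
    P E = ∑ v : α m, P (E ∩ X m ⁻¹' {v}) := by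
  have h : E = ⋃ v : α m, E ∩ X m ⁻¹' {v} := by
    ext ω
    simp only [Set.mem_iUnion, Set.mem_inter_iff, Set.mem_preimage, Set.mem_singleton_iff]
    exact ⟨fun hω => ⟨X m ω, hω, rfl⟩, fun ⟨v, hω, _⟩ => hω⟩
  conv_lhs => rw [h]
  rw [measure_iUnion ?_ fun v => hE.inter (hX m (measurableSet_singleton _))]
  · exact tsum_fintype _
  · intro v v' hvv'
    simp only [Function.onFun, Set.disjoint_left]
    rintro ω ⟨-, h1⟩ ⟨-, h2⟩
    simp only [Set.mem_preimage, Set.mem_singleton_iff] at h1 h2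
    exact hvv' (h1 ▸ h2 ▸ rfl)

/-- partition of a measurable set by full blocks -/
lemma part (hX : ∀ i, Measurable (X i)) (E : Set Ω) (hE : MeasurableSet E) :
    P E = ∑ y : (i : ι) → α i, P (E ∩ ⋂ u, X u ⁻¹' {y u}) := by
  have h : E = ⋃ y : (i : ι) → α i, E ∩ ⋂ u, X u ⁻¹' {y u} := by
    ext ω
    simp only [Set.mem_iUnion, Set.mem_inter_iff, Set.mem_iInter, Set.mem_preimage,
      Set.mem_singleton_iff]
    exact ⟨fun hω => ⟨fun u => X u ω, hω, fun u => rfl⟩, fun ⟨v, hω, _⟩ => hω⟩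
  conv_lhs => rw [h]
  rw [measure_iUnion ?_ fun y => hE.inter (measFull hX y)]
  · exact tsum_fintype _
  · intro y y' hyy'
    simp only [Function.onFun, Set.disjoint_left]
    rintro ω ⟨-, h1⟩ ⟨-, h2⟩
    simp only [Set.mem_iInter, Set.mem_preimage, Set.mem_singleton_iff] at h1 h2
    exact hyy' (funext fun u => (h1 u) ▸ (h2 u) ▸ rfl)


/-- reindexing a sum over functions by splitting off coordinate `m` -/
lemma reindex (m : ι) (x : (i : ι) → α i) (f : ((i : ι) → α i) → ℝ≥0∞) :
    ∑ y : (i : ι) → α i, f y =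
      ∑ y : (i : ι) → α i, ∑ v : α m,
        if y m = x m then f (Function.update y m v) else 0 := by
  have key : ∀ v : α m,
      (∑ y : (i : ι) → α i, if y m = x m then f (Function.update y m v) else 0) =
        ∑ y : (i : ι) → α i, if y m = v then f y else 0 := by
    intro v
    have σli : ∀ y : (i : ι) → α i,
        Function.update (Function.update y m ((Equiv.swap v (x m)) (y m))) m
          ((Equiv.swap v (x m)) ((Function.update y m ((Equiv.swap v (x m)) (y m))) m)) = y := by
      intro y
      funext u
      rcases eq_or_ne u m with rfl | h
      · simp [Function.update_self, Equiv.swap_apply_self]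
      · simp [Function.update_of_ne h]
    set σ : ((i : ι) → α i) ≃ ((i : ι) → α i) :=
      ⟨fun y => Function.update y m ((Equiv.swap v (x m)) (y m)),
       fun y => Function.update y m ((Equiv.swap v (x m)) (y m)), σli, σli⟩ with hσ
    rw [← Equiv.sum_comp σ (fun y => if y m = x m then f (Function.update y m v) else 0)]
    apply Finset.sum_congr rfl
    intro y _
    have h1 : σ y m = (Equiv.swap v (x m)) (y m) := by simp [hσ, Function.update_self]
    have h2 : Function.update (σ y) m v = Function.update y m v := by
      simp [hσ, Function.update_idem]
    rw [h1, h2]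
    have hcond : ((Equiv.swap v (x m)) (y m) = x m) ↔ y m = v := by
      rw [Equiv.apply_eq_iff_eq_symm_apply]
      simp [Equiv.symm_swap, Equiv.swap_apply_right]
    by_cases h : y m = v
    · rw [if_pos (hcond.2 h), if_pos h, ← h, Function.update_eq_self]
    · rw [if_neg (fun hc => h (hcond.1 hc)), if_neg h]
  symm
  calc ∑ y : (i : ι) → α i, ∑ v : α m, (if y m = x m then f (Function.update y m v) else 0)
      = ∑ v : α m, ∑ y : (i : ι) → α i, (if y m = x m then f (Function.update y m v) else 0) :=
        Finset.sum_comm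
    _ = ∑ v : α m, ∑ y : (i : ι) → α i, (if y m = v then f y else 0) :=
        Finset.sum_congr rfl fun v _ => key v
    _ = ∑ y : (i : ι) → α i, ∑ v : α m, (if y m = v then f y else 0) := Finset.sum_comm
    _ = ∑ y : (i : ι) → α i, f y := by
        apply Finset.sum_congr rfl
        intro y _
        simp [Finset.sum_ite_eq]

/-- summing a conditional factor over the value of its own variable gives at most 1 -/
lemma sum_cnd_update (hX : ∀ i, Measurable (X i)) (m : ι) (hmm : ¬ A m m)
    (x : (i : ι) → α i) :
    ∑ v : α m, cnd P X A m (Function.update x m v) ≤ 1 := by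
  have hQ : ∀ v : α m, (⋂ p ∈ Pa A m, X p ⁻¹' {Function.update x m v p}) =
      ⋂ p ∈ Pa A m, X p ⁻¹' {x p} := by
    intro v
    refine Set.iInter₂_congr fun p hp => ?_
    have hpm : p ≠ m := fun h => hmm (h ▸ hp)
    rw [Function.update_of_ne hpm]
  have hv : ∀ v : α m, cnd P X A m (Function.update x m v) =
      P ((⋂ p ∈ Pa A m, X p ⁻¹' {x p}) ∩ X m ⁻¹' {v}) / P (⋂ p ∈ Pa A m, X p ⁻¹' {x p}) := by
    intro v
    unfold cnd
    rw [hQ v, Function.update_self, Set.inter_comm]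
  simp_rw [hv, div_eq_mul_inv, ← Finset.sum_mul]
  rw [← part1 hX _ (measInter hX x) m]
  rw [← div_eq_mul_inv]
  exact ENNReal.div_self_le_one


/-- Lemma B : partial sums of products of conditionals are at most 1. -/
lemma lemB (hX : ∀ i, Measurable (X i)) (hacyc : ∀ v, ¬ Relation.TransGen A v v)
    (W : Finset ι) :
    ∀ x : (i : ι) → α i,
      (∑ y : (i : ι) → α i,
        if (∀ u, u ∉ W → y u = x u) then ∏ u ∈ W, cnd P X A u y else 0) ≤ 1 := by
  induction W using Finset.strongInduction with
  | _ W ih =>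
    intro x
    rcases W.eq_empty_or_nonempty with rfl | hW
    · have h1 : ∀ y : (i : ι) → α i,
          (if (∀ u, u ∉ (∅ : Finset ι) → y u = x u) then
            ∏ u ∈ (∅ : Finset ι), cnd P X A u y else 0) =
          if y = x then 1 else 0 := by
        intro y
        rw [Finset.prod_empty]
        refine if_congr ?_ rfl rfl
        simp [funext_iff]
      rw [Finset.sum_congr rfl fun y _ => h1 y]
      rw [Finset.sum_ite_eq' Finset.univ x (fun _ => (1:ℝ≥0∞))]
      simp
    · -- pick m ∈ W with no child in W
      have hwf : WellFounded (fun a b : ι => Relation.TransGen A b a) := by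
        have : IsTrans ι (fun a b : ι => Relation.TransGen A b a) :=
          ⟨fun a b c h1 h2 => h2.trans h1⟩
        have : IsIrrefl ι (fun a b : ι => Relation.TransGen A b a) := ⟨fun a => hacyc a⟩
        exact Finite.wellFounded_of_trans_of_irrefl _
      obtain ⟨mw, hmw⟩ := hW
      obtain ⟨m, hmW, hmin⟩ := hwf.has_min (↑W : Set ι) ⟨mw, hmw⟩
      have hmW : m ∈ W := hmW
      have hmtop : ∀ u ∈ W, ¬ A m u := fun u hu hA => hmin u hu (Relation.TransGen.single hA)
      set W' := W.erase m with hW'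
      have hmm : ¬ A m m := fun h => hacyc m (Relation.TransGen.single h)
      -- reindex the sum
      rw [reindex m x]
      have hterm : ∀ y : (i : ι) → α i,
          (∑ v : α m, if y m = x m then
            (if (∀ u, u ∉ W → Function.update y m v u = x u) then
              ∏ u ∈ W, cnd P X A u (Function.update y m v) else 0) else 0) ≤
          (if (∀ u, u ∉ W' → y u = x u) then ∏ u ∈ W', cnd P X A u y else 0) := by
        intro y
        by_cases hym : y m = x m
        · simp only [if_pos hym]
          by_cases hC : ∀ u, u ∉ W → y u = x u
          · have hCv : ∀ v : α m, (∀ u, u ∉ W → Function.update y m v u = x u) := by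
              intro v u hu
              rw [Function.update_of_ne (fun h => hu (by rw [h]; exact hmW))]
              exact hC u hu
            have hprod : ∀ v : α m,
                (∏ u ∈ W, cnd P X A u (Function.update y m v)) =
                cnd P X A m (Function.update y m v) * ∏ u ∈ W', cnd P X A u y := by
              intro v
              rw [← Finset.mul_prod_erase W _ hmW]
              congr 1
              refine Finset.prod_congr rfl fun u hu => ?_
              have hum : u ≠ m := (Finset.mem_erase.1 hu).1
              refine cnd_congr (Function.update_of_ne hum _ _) fun p hp => ?_
              have hpm : p ≠ m := fun h => hmtop u (Finset.mem_of_mem_erase hu) (h ▸ hp)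
              exact Function.update_of_ne hpm _ _
            have hcond' : (∀ u, u ∉ W' → y u = x u) := by
              intro u hu
              rcases eq_or_ne u m with rfl | hum
              · exact hym
              · exact hC u (fun h => hu (Finset.mem_erase.2 ⟨hum, h⟩))
            rw [if_pos hcond']
            calc ∑ v : α m, (if (∀ u, u ∉ W → Function.update y m v u = x u) then
                    ∏ u ∈ W, cnd P X A u (Function.update y m v) else 0)
                = ∑ v : α m, cnd P X A m (Function.update y m v) * ∏ u ∈ W', cnd P X A u y := by
                  refine Finset.sum_congr rfl fun v _ => ?_
                  rw [if_pos (hCv v), hprod v]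
              _ = (∑ v : α m, cnd P X A m (Function.update y m v)) * ∏ u ∈ W', cnd P X A u y := by
                  rw [Finset.sum_mul]
              _ ≤ 1 * ∏ u ∈ W', cnd P X A u y :=
                  mul_le_mul_left (sum_cnd_update hX m hmm y) _
              _ = ∏ u ∈ W', cnd P X A u y := one_mul _
          · have : ∀ v : α m, ¬ (∀ u, u ∉ W → Function.update y m v u = x u) := by
              intro v hv
              exact hC fun u hu => by
                have := hv u hu
                rwa [Function.update_of_ne (fun h => hu (by rw [h]; exact hmW))] at this
            have hz : (∑ v : α m, if (∀ u, u ∉ W → Function.update y m v u = x u) then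
                ∏ u ∈ W, cnd P X A u (Function.update y m v) else 0) = 0 :=
              Finset.sum_eq_zero fun v _ => if_neg (this v)
            rw [hz]
            exact zero_le
        · simp only [if_neg hym, Finset.sum_const_zero]
          exact zero_le
      calc (∑ y : (i : ι) → α i, ∑ v : α m, if y m = x m then
              (if (∀ u, u ∉ W → Function.update y m v u = x u) then
                ∏ u ∈ W, cnd P X A u (Function.update y m v) else 0) else 0)
          ≤ ∑ y : (i : ι) → α i,
              (if (∀ u, u ∉ W' → y u = x u) then ∏ u ∈ W', cnd P X A u y else 0) :=
            Finset.sum_le_sum fun y _ => hterm y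
        _ ≤ 1 := ih W' (Finset.erase_ssubset hmW) x


/-- Main marginalization lemma: for an ancestral set `T`,
the marginal of the block is the product of conditionals over `T`. -/
lemma lemL (hX : ∀ i, Measurable (X i)) (hacyc : ∀ v, ¬ Relation.TransGen A v v)
    (hfact : ∀ x : (i : ι) → α i, P (⋂ i, X i ⁻¹' {x i}) = ∏ i, cnd P X A i x)
    (T : Finset ι) (hT : ∀ u ∈ T, ∀ p, A p u → p ∈ T) (x : (i : ι) → α i) :
    P (⋂ u ∈ T, X u ⁻¹' {x u}) = ∏ u ∈ T, cnd P X A u x := by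
  -- Step a : expansion of a T-marginal into full blocks
  have key2 : ∀ z : (i : ι) → α i, P (⋂ u ∈ T, X u ⁻¹' {z u}) =
      ∑ y : (i : ι) → α i,
        if (∀ u ∈ T, y u = z u) then P (⋂ u, X u ⁻¹' {y u}) else 0 := by
    intro z
    rw [part hX _ (measInter hX z)]
    refine Finset.sum_congr rfl fun y _ => ?_
    by_cases h : ∀ u ∈ T, y u = z u
    · rw [if_pos h, Set.inter_eq_self_of_subset_right ?_]
      intro ω hω
      simp only [Set.mem_iInter, Set.mem_preimage, Set.mem_singleton_iff] at hω ⊢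
      intro u hu
      rw [← h u hu]
      exact hω u
    · rw [if_neg h]
      push_neg at h
      obtain ⟨u, huT, hne⟩ := h
      refine measure_mono_null ?_ measure_empty
      rintro ω ⟨h1, h2⟩
      simp only [Set.mem_iInter, Set.mem_preimage, Set.mem_singleton_iff] at h1 h2
      exact absurd ((h2 u).symm.trans (h1 u huT)) (fun hh => hne hh)
  -- Step d : the factorized form of the marginal
  have key3 : ∀ z : (i : ι) → α i, P (⋂ u ∈ T, X u ⁻¹' {z u}) =
      (∏ u ∈ T, cnd P X A u z) *
        ∑ y : (i : ι) → α i,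
          if (∀ u ∈ T, y u = z u) then ∏ u ∈ Tᶜ, cnd P X A u y else 0 := by
    intro z
    rw [key2 z, Finset.mul_sum]
    refine Finset.sum_congr rfl fun y _ => ?_
    by_cases h : ∀ u ∈ T, y u = z u
    · rw [if_pos h, if_pos h, hfact y, ← Finset.prod_mul_prod_compl T]
      congr 1
      refine Finset.prod_congr rfl fun u hu => ?_
      exact cnd_congr (h u hu) fun p hp => h p (hT u hu p hp)
    · rw [if_neg h, if_neg h, mul_zero]
  -- Step e : the remaining sum is at most 1
  have hsle : ∀ z : (i : ι) → α i,
      (∑ y : (i : ι) → α i,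
        if (∀ u ∈ T, y u = z u) then ∏ u ∈ Tᶜ, cnd P X A u y else 0) ≤ 1 := by
    intro z
    have h := lemB (P := P) hX hacyc Tᶜ z
    simp only [Finset.mem_compl, not_not] at h
    exact h
  -- Step f : summing the T-marginals over T-assignments gives 1
  have hOne : (1 : ℝ≥0∞) =
      ∑ z : (i : ι) → α i,
        if (∀ u, u ∉ T → z u = x u) then P (⋂ u ∈ T, X u ⁻¹' {z u}) else 0 := by
    calc (1 : ℝ≥0∞) = P Set.univ := measure_univ.symm
      _ = ∑ y : (i : ι) → α i, P (Set.univ ∩ ⋂ u, X u ⁻¹' {y u}) :=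
          part hX _ MeasurableSet.univ
      _ = ∑ y : (i : ι) → α i, P (⋂ u, X u ⁻¹' {y u}) := by simp [Set.univ_inter]
      _ = ∑ y : (i : ι) → α i, ∑ z : (i : ι) → α i,
            if z = T.piecewise y x then P (⋂ u, X u ⁻¹' {y u}) else 0 := by
          refine Finset.sum_congr rfl fun y _ => ?_
          rw [Finset.sum_ite_eq' Finset.univ (T.piecewise y x) (fun _ => P (⋂ u, X u ⁻¹' {y u}))]
          simp
      _ = ∑ z : (i : ι) → α i, ∑ y : (i : ι) → α i,
            if z = T.piecewise y x then P (⋂ u, X u ⁻¹' {y u}) else 0 := Finset.sum_comm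
      _ = ∑ z : (i : ι) → α i,
            if (∀ u, u ∉ T → z u = x u) then P (⋂ u ∈ T, X u ⁻¹' {z u}) else 0 := by
          refine Finset.sum_congr rfl fun z _ => ?_
          by_cases hc : ∀ u, u ∉ T → z u = x u
          · rw [if_pos hc, key2 z]
            refine Finset.sum_congr rfl fun y _ => ?_
            refine if_congr ⟨fun h u hu => by rw [h, T.piecewise_eq_of_mem _ _ hu], fun h => ?_⟩ rfl rfl
            funext u
            by_cases hu : u ∈ T
            · rw [T.piecewise_eq_of_mem _ _ hu]; exact (h u hu).symm
            · rw [T.piecewise_eq_of_notMem _ _ hu]; exact hc u hu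
          · rw [if_neg hc]
            refine Finset.sum_eq_zero fun y _ => if_neg fun h => ?_
            exact hc fun u hu => by rw [h, T.piecewise_eq_of_notMem _ _ hu]
  -- Step g and squeeze
  set f : ((i : ι) → α i) → ℝ≥0∞ := fun z =>
    if (∀ u, u ∉ T → z u = x u) then P (⋂ u ∈ T, X u ⁻¹' {z u}) else 0 with hf
  set g : ((i : ι) → α i) → ℝ≥0∞ := fun z =>
    if (∀ u, u ∉ T → z u = x u) then ∏ u ∈ T, cnd P X A u z else 0 with hg
  have hle : ∀ z, f z ≤ g z := by
    intro z
    simp only [hf, hg]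
    by_cases hc : ∀ u, u ∉ T → z u = x u
    · rw [if_pos hc, if_pos hc, key3 z]
      calc (∏ u ∈ T, cnd P X A u z) * _ ≤ (∏ u ∈ T, cnd P X A u z) * 1 :=
            mul_le_mul_right (hsle z) _
        _ = ∏ u ∈ T, cnd P X A u z := mul_one _
    · rw [if_neg hc, if_neg hc]
  have hsum : ∑ z, g z ≤ ∑ z, f z := by
    rw [← hOne]
    exact lemB hX hacyc T x
  have hfin : (∑ z, f z) ≠ ⊤ := by rw [← hOne]; exact ENNReal.one_ne_top
  have := tw hle hsum hfin x
  have hfx : f x = P (⋂ u ∈ T, X u ⁻¹' {x u}) := by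
    simp [hf]
  have hgx : g x = ∏ u ∈ T, cnd P X A u x := by
    simp [hg]
  exact le_antisymm (by rw [← hfx, ← hgx]; exact hle x) (by rw [← hfx, ← hgx]; exact this)


end BNFact

/-- Factorization semantic implies independence semantic for discrete Bayesian Networks:
if `P(x₁, …, xₘ) = ∏ᵢ P(xᵢ | pa_G(Xᵢ))` for a DAG `G`, then each `Xᵢ` is conditionally
independent of its non-descendants (with the parents removed, per the usual convention)
given its parents. -/
theorem bn_factorization_implies_independence
    {Ω ι : Type*} [MeasurableSpace Ω] (P : Measure Ω) [IsProbabilityMeasure P]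
    [Fintype ι] {α : ι → Type*} [∀ i, Fintype (α i)]
    [∀ i, MeasurableSpace (α i)] [∀ i, MeasurableSingletonClass (α i)]
    (X : (i : ι) → Ω → α i) (hX : ∀ i, Measurable (X i))
    (A : ι → ι → Prop) (hacyc : ∀ v, ¬ Relation.TransGen A v v)
    (hfact : ∀ x : (i : ι) → α i,
      P (⋂ i, X i ⁻¹' {x i}) =
        ∏ i, P (X i ⁻¹' {x i} ∩ ⋂ u ∈ Pa A i, X u ⁻¹' {x u}) /
              P (⋂ u ∈ Pa A i, X u ⁻¹' {x u})) :
    ∀ i : ι, ∀ x : (j : ι) → α j,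
      0 < P (⋂ u ∈ Pa A i, X u ⁻¹' {x u}) →
      P ((X i ⁻¹' {x i} ∩ ⋂ u ∈ NonDe A i \ Pa A i, X u ⁻¹' {x u}) ∩
            ⋂ u ∈ Pa A i, X u ⁻¹' {x u}) / P (⋂ u ∈ Pa A i, X u ⁻¹' {x u}) =
        (P (X i ⁻¹' {x i} ∩ ⋂ u ∈ Pa A i, X u ⁻¹' {x u}) /
            P (⋂ u ∈ Pa A i, X u ⁻¹' {x u})) *
        (P ((⋂ u ∈ NonDe A i \ Pa A i, X u ⁻¹' {x u}) ∩ ⋂ u ∈ Pa A i, X u ⁻¹' {x u}) /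
            P (⋂ u ∈ Pa A i, X u ⁻¹' {x u})) := by
  intro i x _hpos
  classical
  have hPaN : Pa A i ⊆ NonDe A i := by
    intro p hp
    refine ⟨fun h => hacyc i (Relation.TransGen.single (h ▸ hp)), fun htg => hacyc i (htg.tail hp)⟩
  have hiN : i ∉ NonDe A i := fun h => h.1 rfl
  set T1 : Finset ι := (Set.toFinite (NonDe A i)).toFinset with hT1
  have hT1mem : ∀ u, u ∈ T1 ↔ u ∈ NonDe A i := fun u => Set.Finite.mem_toFinset _
  have hiT1 : i ∉ T1 := fun h => hiN ((hT1mem i).1 h)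
  have hanc1 : ∀ u ∈ T1, ∀ p, A p u → p ∈ T1 := by
    intro u hu p hp
    have hu' : u ∈ NonDe A i := (hT1mem u).1 hu
    refine (hT1mem p).2 ⟨fun h => hu'.2 (Relation.TransGen.single (h ▸ hp)),
      fun htg => hu'.2 (htg.tail hp)⟩
  have hanc2 : ∀ u ∈ insert i T1, ∀ p, A p u → p ∈ insert i T1 := by
    intro u hu p hp
    rcases Finset.mem_insert.1 hu with rfl | hu'
    · exact Finset.mem_insert_of_mem ((hT1mem p).2 (hPaN hp))
    · exact Finset.mem_insert_of_mem (hanc1 u hu' p hp)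
  have hfact' : ∀ y : (j : ι) → α j,
      P (⋂ j, X j ⁻¹' {y j}) = ∏ j, BNFact.cnd P X A j y := hfact
  have L1 := BNFact.lemL hX hacyc hfact' T1 hanc1 x
  have L2 := BNFact.lemL hX hacyc hfact' (insert i T1) hanc2 x
  have hset1 : ((⋂ u ∈ NonDe A i \ Pa A i, X u ⁻¹' {x u}) ∩ ⋂ u ∈ Pa A i, X u ⁻¹' {x u}) =
      ⋂ u ∈ T1, X u ⁻¹' {x u} := by
    rw [← Set.biInter_union, Set.diff_union_of_subset hPaN]
    ext ω
    simp only [Set.mem_iInter, hT1mem]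
  have hset2 : ((X i ⁻¹' {x i} ∩ ⋂ u ∈ NonDe A i \ Pa A i, X u ⁻¹' {x u}) ∩
      ⋂ u ∈ Pa A i, X u ⁻¹' {x u}) = ⋂ u ∈ insert i T1, X u ⁻¹' {x u} := by
    rw [Set.inter_assoc, hset1]
    ext ω
    simp only [Set.mem_inter_iff, Set.mem_iInter, Finset.mem_insert, Set.mem_preimage,
      Set.mem_singleton_iff]
    constructor
    · rintro ⟨h1, h2⟩ u hu
      rcases hu with rfl | hu
      · exact h1
      · exact h2 u hu
    · intro h
      exact ⟨h i (Or.inl rfl), fun u hu => h u (Or.inr hu)⟩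
  rw [hset1, hset2, L2, Finset.prod_insert hiT1, ← L1]
  simp only [BNFact.cnd]
  simp only [div_eq_mul_inv, mul_assoc]
end

section
/- For random variables with a discrete joint distribution, the independence semantic implies the factorization semantic of Bayesian Networks: if each Xᵢ is conditionally independent of its non-descendants in a DAG G given its parents in G, then the joint distribution factorizes as P(x₁, ..., xₘ) = ∏_{i=1}^m P(xᵢ | pa_G(Xᵢ)). -/
open MeasureTheory

lemma exists_max_node {ι : Type*} (A : ι → ι → Prop)
    (hacyc : ∀ v, ¬ Relation.TransGen A v v) :
    ∀ s : Finset ι, s.Nonempty → ∃ i ∈ s, ∀ j ∈ s, ¬ Relation.TransGen A i j := by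
  classical
  intro s
  induction s using Finset.induction_on with
  | empty => rintro ⟨a, ha⟩; simp at ha
  | @insert a t hat ih =>
    intro _
    by_cases hmax : ∀ j ∈ insert a t, ¬ Relation.TransGen A a j
    · exact ⟨a, Finset.mem_insert_self a t, hmax⟩
    · push_neg at hmax
      obtain ⟨j, hj, haj⟩ := hmax
      have hjt : j ∈ t := by
        rcases Finset.mem_insert.mp hj with rfl | h
        · exact absurd haj (hacyc j)
        · exact h
      obtain ⟨m, hmt, hm⟩ := ih ⟨j, hjt⟩
      refine ⟨m, Finset.mem_insert_of_mem hmt, ?_⟩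
      intro k hk hmk
      rcases Finset.mem_insert.mp hk with rfl | hkt
      · exact hm j hjt (hmk.trans haj)
      · exact hm k hkt hmk

lemma measure_eq_tsum_partition {Ω ι : Type*} [MeasurableSpace Ω] (P : Measure Ω)
    [Fintype ι] {α : ι → Type*} [∀ i, Fintype (α i)]
    [∀ i, MeasurableSpace (α i)] [∀ i, MeasurableSingletonClass (α i)]
    (X : (i : ι) → Ω → α i) (hX : ∀ i, Measurable (X i)) (R : Set ι)
    (S : Set Ω) (hS : MeasurableSet S) :
    P S = ∑' z : (∀ j : R, α j), P (S ∩ ⋂ j : R, X j ⁻¹' {z j}) := by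
  classical
  have hcover : (⋃ z : (∀ j : R, α j), ⋂ j : R, X (j : ι) ⁻¹' {z j}) = Set.univ := by
    ext ω
    simp only [Set.mem_iUnion, Set.mem_iInter, Set.mem_preimage, Set.mem_singleton_iff,
      Set.mem_univ, iff_true]
    exact ⟨fun j => X j ω, fun j => rfl⟩
  have hmeas : ∀ z : (∀ j : R, α j), MeasurableSet (S ∩ ⋂ j : R, X (j : ι) ⁻¹' {z j}) :=
    fun z => hS.inter (MeasurableSet.iInter fun j => hX j (measurableSet_singleton _))
  have hdisj : Pairwise (Function.onFun Disjoint
      fun z : (∀ j : R, α j) => S ∩ ⋂ j : R, X (j : ι) ⁻¹' {z j}) := by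
    intro z z' hzz'
    refine Set.disjoint_left.mpr fun ω hω hω' => hzz' ?_
    funext j
    have h1 : X (j : ι) ω = z j := by
      have := hω.2
      simp only [Set.mem_iInter, Set.mem_preimage, Set.mem_singleton_iff] at this
      exact this j
    have h2 : X (j : ι) ω = z' j := by
      have := hω'.2
      simp only [Set.mem_iInter, Set.mem_preimage, Set.mem_singleton_iff] at this
      exact this j
    rw [← h1, h2]
  calc P S = P (⋃ z : (∀ j : R, α j), S ∩ ⋂ j : R, X (j : ι) ⁻¹' {z j}) := by
        rw [← Set.inter_iUnion, hcover, Set.inter_univ]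
    _ = ∑' z : (∀ j : R, α j), P (S ∩ ⋂ j : R, X (j : ι) ⁻¹' {z j}) :=
        measure_iUnion hdisj hmeas

lemma bn_step {Ω ι : Type*} [MeasurableSpace Ω] (P : Measure Ω) [IsProbabilityMeasure P]
    [Fintype ι] {α : ι → Type*} [∀ i, Fintype (α i)]
    [∀ i, MeasurableSpace (α i)] [∀ i, MeasurableSingletonClass (α i)]
    (X : (i : ι) → Ω → α i) (hX : ∀ i, Measurable (X i))
    (A : ι → ι → Prop)
    (hindep : ∀ i : ι, ∀ x : (j : ι) → α j,
      0 < P (⋂ u ∈ Pa A i, X u ⁻¹' {x u}) →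
      P ((X i ⁻¹' {x i} ∩ ⋂ u ∈ NonDe A i \ Pa A i, X u ⁻¹' {x u}) ∩
            ⋂ u ∈ Pa A i, X u ⁻¹' {x u}) / P (⋂ u ∈ Pa A i, X u ⁻¹' {x u}) =
        (P (X i ⁻¹' {x i} ∩ ⋂ u ∈ Pa A i, X u ⁻¹' {x u}) /
            P (⋂ u ∈ Pa A i, X u ⁻¹' {x u})) *
        (P ((⋂ u ∈ NonDe A i \ Pa A i, X u ⁻¹' {x u}) ∩ ⋂ u ∈ Pa A i, X u ⁻¹' {x u}) /
            P (⋂ u ∈ Pa A i, X u ⁻¹' {x u})))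
    (i : ι) (x : (j : ι) → α j) (s : Finset ι)
    (hPa : ∀ u, A u i → u ∈ s)
    (hND : ∀ j ∈ s, j ∈ NonDe A i) :
    P (X i ⁻¹' {x i} ∩ ⋂ j ∈ s, X j ⁻¹' {x j}) =
      P (X i ⁻¹' {x i} ∩ ⋂ u ∈ Pa A i, X u ⁻¹' {x u}) /
          P (⋂ u ∈ Pa A i, X u ⁻¹' {x u}) *
        P (⋂ j ∈ s, X j ⁻¹' {x j}) := by
  classical
  set PaE := ⋂ u ∈ Pa A i, X u ⁻¹' {x u} with hPaE_def
  set B := ⋂ j ∈ s, X j ⁻¹' {x j} with hB_def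
  have hBPa : B ⊆ PaE := by
    intro ω hω
    simp only [hB_def, hPaE_def, Set.mem_iInter] at *
    exact fun u hu => hω u (hPa u hu)
  by_cases h0 : P PaE = 0
  · have hnum : P (X i ⁻¹' {x i} ∩ PaE) = 0 :=
      le_antisymm ((measure_mono Set.inter_subset_right).trans h0.le) zero_le
    have hLHS : P (X i ⁻¹' {x i} ∩ B) = 0 :=
      le_antisymm ((measure_mono (Set.inter_subset_right.trans hBPa)).trans h0.le) zero_le
    rw [hLHS, hnum, ENNReal.zero_div, zero_mul]
  · have hpos : 0 < P PaE := pos_iff_ne_zero.mpr h0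
    have hne_top : P PaE ≠ ⊤ := measure_ne_top P _
    set R : Set ι := (NonDe A i \ Pa A i) \ ↑s with hR_def
    set x' : (∀ j : R, α j) → ∀ j, α j :=
      fun z j => if h : j ∈ R then z ⟨j, h⟩ else x j with hx'_def
    have hiR : i ∉ R := fun h => h.1.1.1 rfl
    have hxi : ∀ z, x' z i = x i := fun z => dif_neg hiR
    have hxPa : ∀ z, ∀ u ∈ Pa A i, x' z u = x u :=
      fun z u hu => dif_neg (fun h => h.1.2 hu)
    have hxs : ∀ z, ∀ j ∈ s, x' z j = x j :=
      fun z j hj => dif_neg (fun h => h.2 (by exact_mod_cast hj))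
    have hPaE_eq : ∀ z, (⋂ u ∈ Pa A i, X u ⁻¹' {x' z u}) = PaE := by
      intro z
      rw [hPaE_def]
      exact Set.iInter₂_congr fun u hu => by rw [hxPa z u hu]
    have key : ∀ z, B ∩ (⋂ j : R, X (j : ι) ⁻¹' {z j}) =
        (⋂ u ∈ NonDe A i \ Pa A i, X u ⁻¹' {x' z u}) ∩ PaE := by
      intro z
      ext ω
      simp only [hB_def, hPaE_def, Set.mem_inter_iff, Set.mem_iInter, Set.mem_preimage,
        Set.mem_singleton_iff]
      constructor
      · rintro ⟨hB, hC⟩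
        refine ⟨fun u hu => ?_, fun u hu => hB u (hPa u hu)⟩
        by_cases hus : u ∈ s
        · rw [hxs z u hus]; exact hB u hus
        · have huR : u ∈ R := ⟨hu, hus⟩
          have : x' z u = z ⟨u, huR⟩ := dif_pos huR
          rw [this]; exact hC ⟨u, huR⟩
      · rintro ⟨hN, hPaω⟩
        constructor
        · intro j hj
          by_cases hjPa : j ∈ Pa A i
          · exact hPaω j hjPa
          · have hjD : j ∈ NonDe A i \ Pa A i := ⟨hND j hj, hjPa⟩
            have := hN j hjD
            rwa [hxs z j hj] at this
        · intro j
          have hjD : (j : ι) ∈ NonDe A i \ Pa A i := j.2.1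
          have := hN j hjD
          rwa [show x' z (j : ι) = z j from dif_pos j.2] at this
    have key2 : ∀ z, (X i ⁻¹' {x i} ∩ B) ∩ (⋂ j : R, X (j : ι) ⁻¹' {z j}) =
        (X i ⁻¹' {x i} ∩ ⋂ u ∈ NonDe A i \ Pa A i, X u ⁻¹' {x' z u}) ∩ PaE := by
      intro z
      rw [Set.inter_assoc, key z, ← Set.inter_assoc]
    have hz' : ∀ z, P ((X i ⁻¹' {x i} ∩ ⋂ u ∈ NonDe A i \ Pa A i, X u ⁻¹' {x' z u}) ∩ PaE) =
        P (X i ⁻¹' {x i} ∩ PaE) / P PaE *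
          P ((⋂ u ∈ NonDe A i \ Pa A i, X u ⁻¹' {x' z u}) ∩ PaE) := by
      intro z
      have hz := hindep i (x' z) (by rw [hPaE_eq z]; exact hpos)
      rw [hPaE_eq z, hxi z] at hz
      calc P ((X i ⁻¹' {x i} ∩ ⋂ u ∈ NonDe A i \ Pa A i, X u ⁻¹' {x' z u}) ∩ PaE)
          = P ((X i ⁻¹' {x i} ∩ ⋂ u ∈ NonDe A i \ Pa A i, X u ⁻¹' {x' z u}) ∩ PaE)
              / P PaE * P PaE := (ENNReal.div_mul_cancel h0 hne_top).symm
        _ = (P (X i ⁻¹' {x i} ∩ PaE) / P PaE) *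
              (P ((⋂ u ∈ NonDe A i \ Pa A i, X u ⁻¹' {x' z u}) ∩ PaE) / P PaE) * P PaE := by
            rw [hz]
        _ = (P (X i ⁻¹' {x i} ∩ PaE) / P PaE) *
              (P ((⋂ u ∈ NonDe A i \ Pa A i, X u ⁻¹' {x' z u}) ∩ PaE) / P PaE * P PaE) := by
            rw [mul_assoc]
        _ = _ := by rw [ENNReal.div_mul_cancel h0 hne_top]
    have hBmeas : MeasurableSet B := by
      rw [hB_def]
      exact MeasurableSet.biInter s.countable_toSet
        (fun j _ => hX j (measurableSet_singleton _))
    have hEBmeas : MeasurableSet (X i ⁻¹' {x i} ∩ B) :=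
      (hX i (measurableSet_singleton _)).inter hBmeas
    calc P (X i ⁻¹' {x i} ∩ B)
        = ∑' z : (∀ j : R, α j), P ((X i ⁻¹' {x i} ∩ B) ∩ ⋂ j : R, X (j : ι) ⁻¹' {z j}) :=
          measure_eq_tsum_partition P X hX R _ hEBmeas
      _ = ∑' z : (∀ j : R, α j),
            P ((X i ⁻¹' {x i} ∩ ⋂ u ∈ NonDe A i \ Pa A i, X u ⁻¹' {x' z u}) ∩ PaE) := by
          exact tsum_congr fun z => congrArg P (key2 z)
      _ = ∑' z : (∀ j : R, α j), P (X i ⁻¹' {x i} ∩ PaE) / P PaE *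
            P ((⋂ u ∈ NonDe A i \ Pa A i, X u ⁻¹' {x' z u}) ∩ PaE) :=
          tsum_congr hz'
      _ = P (X i ⁻¹' {x i} ∩ PaE) / P PaE *
            ∑' z : (∀ j : R, α j), P ((⋂ u ∈ NonDe A i \ Pa A i, X u ⁻¹' {x' z u}) ∩ PaE) :=
          ENNReal.tsum_mul_left
      _ = P (X i ⁻¹' {x i} ∩ PaE) / P PaE *
            ∑' z : (∀ j : R, α j), P (B ∩ ⋂ j : R, X (j : ι) ⁻¹' {z j}) := by
          exact congrArg _ (tsum_congr fun z => congrArg P (key z).symm)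
      _ = P (X i ⁻¹' {x i} ∩ PaE) / P PaE * P B := by
          rw [← measure_eq_tsum_partition P X hX R B hBmeas]

/-- Independence semantic implies factorization semantic for discrete Bayesian Networks:
if each `Xᵢ` is conditionally independent of its non-descendants (with the parents
removed, per the usual convention) given its parents in a DAG `G`, then the joint
distribution factorizes as `P(x₁, …, xₘ) = ∏ᵢ P(xᵢ | pa_G(Xᵢ))`. -/
theorem bn_independence_implies_factorization
    {Ω ι : Type*} [MeasurableSpace Ω] (P : Measure Ω) [IsProbabilityMeasure P]
    [Fintype ι] {α : ι → Type*} [∀ i, Fintype (α i)]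
    [∀ i, MeasurableSpace (α i)] [∀ i, MeasurableSingletonClass (α i)]
    (X : (i : ι) → Ω → α i) (hX : ∀ i, Measurable (X i))
    (A : ι → ι → Prop) (hacyc : ∀ v, ¬ Relation.TransGen A v v)
    (hindep : ∀ i : ι, ∀ x : (j : ι) → α j,
      0 < P (⋂ u ∈ Pa A i, X u ⁻¹' {x u}) →
      P ((X i ⁻¹' {x i} ∩ ⋂ u ∈ NonDe A i \ Pa A i, X u ⁻¹' {x u}) ∩
            ⋂ u ∈ Pa A i, X u ⁻¹' {x u}) / P (⋂ u ∈ Pa A i, X u ⁻¹' {x u}) =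
        (P (X i ⁻¹' {x i} ∩ ⋂ u ∈ Pa A i, X u ⁻¹' {x u}) /
            P (⋂ u ∈ Pa A i, X u ⁻¹' {x u})) *
        (P ((⋂ u ∈ NonDe A i \ Pa A i, X u ⁻¹' {x u}) ∩ ⋂ u ∈ Pa A i, X u ⁻¹' {x u}) /
            P (⋂ u ∈ Pa A i, X u ⁻¹' {x u}))) :
    ∀ x : (i : ι) → α i,
      P (⋂ i, X i ⁻¹' {x i}) =
        ∏ i, P (X i ⁻¹' {x i} ∩ ⋂ u ∈ Pa A i, X u ⁻¹' {x u}) /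
              P (⋂ u ∈ Pa A i, X u ⁻¹' {x u}) := by
  classical
  intro x
  have main : ∀ s : Finset ι, (∀ u v, A u v → v ∈ s → u ∈ s) →
      P (⋂ j ∈ s, X j ⁻¹' {x j}) =
        ∏ j ∈ s, P (X j ⁻¹' {x j} ∩ ⋂ u ∈ Pa A j, X u ⁻¹' {x u}) /
          P (⋂ u ∈ Pa A j, X u ⁻¹' {x u}) := by
    intro s
    induction s using Finset.strongInduction with
    | _ s ih =>
      intro hclosed
      rcases s.eq_empty_or_nonempty with rfl | hne
      · simp
      · obtain ⟨i, his, hmax⟩ := exists_max_node A hacyc s hne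
        have herase : ∀ u v, A u v → v ∈ s.erase i → u ∈ s.erase i := by
          intro u v huv hv
          have hvs := Finset.mem_of_mem_erase hv
          have hus : u ∈ s := hclosed u v huv hvs
          refine Finset.mem_erase.mpr ⟨?_, hus⟩
          rintro rfl
          exact hmax v hvs (Relation.TransGen.single huv)
        have hPa' : ∀ u, A u i → u ∈ s.erase i := by
          intro u hu
          refine Finset.mem_erase.mpr ⟨?_, hclosed u i hu his⟩
          rintro rfl
          exact hacyc _ (Relation.TransGen.single hu)
        have hND' : ∀ j ∈ s.erase i, j ∈ NonDe A i :=
          fun j hj => ⟨Finset.ne_of_mem_erase hj, hmax j (Finset.mem_of_mem_erase hj)⟩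
        have hsplit : (⋂ j ∈ s, X j ⁻¹' {x j}) =
            X i ⁻¹' {x i} ∩ ⋂ j ∈ s.erase i, X j ⁻¹' {x j} := by
          conv_lhs => rw [← Finset.insert_erase his]
          rw [Finset.set_biInter_insert]
        rw [hsplit, bn_step P X hX A hindep i x (s.erase i) hPa' hND',
          ih (s.erase i) (Finset.erase_ssubset his) herase,
          ← Finset.mul_prod_erase s _ his]
  have huniv := main Finset.univ (fun u _ _ _ => Finset.mem_univ u)
  have h1 : (⋂ j ∈ Finset.univ, X j ⁻¹' {x j}) = ⋂ j, X (j : ι) ⁻¹' {x j} := by simp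
  rw [h1] at huniv
  exact huniv
end
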